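/- (Reduction from critical graphs to the unitary case.) Suppose G(p) is critical and Δ is a 1-disruption uncertainty set with deviation d̂₀ > 0, and M = L⁰(s,t) + d̂₀ M' with M' a nonnegative integer. Let z* be the earliest nominal schedule, z*_i = L⁰(s,i). Then for all i ≺ j, L⁰(i,j) = z*_j − z*_i and L^Δ(i,j) = z*_j − z*_i + d̂₀ for i,j with relevant predecessors; consequently (z,h) satisfies the (Dom) constraints for the instance (G(p), M, Δ) if and only if ((z − z*)/d̂₀, h) satisfies the (Dom) constraints for the unitary instance (G, 0, unit deviation, M'), and the polytope of the linear relaxation of (Dom) has integer h-components at all extreme points. -/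

import Mathlib

/-!
Criticality makes all `i`–`j` paths equally long, so the nominal longest paths are differences
of the earliest schedule `z* = L⁰(s, ·)`, and one disruption of size `d̂₀` on a job lying on an
`i`–`j` path raises its worst-case length by exactly `d̂₀`. Writing `z = z* + d̂₀ W`, the (Dom)
constraints become difference constraints with integer right-hand sides in the coordinates
`W v` and `W v - h v`. Shifting every non-integral coordinate by `±ε` keeps each tight
constraint tight, so at an extreme point all these coordinates, hence all `h v`, are integers.
-/

/-- Length of a path (given as a list of vertices) when each arc `(i,j)` has
length `q i` (the duration of its source vertex). -/
def PathLen {V : Type*} (q : V → ℝ) (l : List V) : ℝ := (l.dropLast.map q).sum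

/-- `l` is a path from `i` to `j` in the digraph with arc relation `A`. -/
def IsPath {V : Type*} (A : V → V → Prop) (i j : V) (l : List V) : Prop :=
  l ≠ [] ∧ l.Chain' A ∧ l.head? = some i ∧ l.getLast? = some j

/-- Length of a path for arc-indexed weights `w`. -/
def LenW {V : Type*} (w : V → V → ℝ) : List V → ℝ
  | a :: b :: l => w a b + LenW w (b :: l)
  | _ => 0

/-- `x` is a schedule of the precedence graph `(V, A)` with durations `q` and source `s`. -/
def Sched {V : Type*} (A : V → V → Prop) (s : V) (q x : V → ℝ) : Prop :=
  x s = 0 ∧ (∀ v, 0 ≤ x v) ∧ ∀ i j, A i j → q i ≤ x j - x i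

/-- `H` is `x`-anchored for the uncertainty set `Δ`. -/
def XAnchored {V : Type*} (A : V → V → Prop) (s : V) (p : V → ℝ)
    (Δ : Set (V → ℝ)) (x : V → ℝ) (H : Set V) : Prop :=
  ∀ δ ∈ Δ, ∃ y, Sched A s (fun v => p v + δ v) y ∧ ∀ i ∈ H, y i = x i

/-- `L` is the longest `i`–`j` path length under durations `q`. -/
def IsLongest {V : Type*} (A : V → V → Prop) (q : V → ℝ) (i j : V) (L : ℝ) : Prop :=
  IsGreatest {r | ∃ l, IsPath A i j l ∧ PathLen q l = r} L

/-- `L` is the worst-case longest `i`–`j` path length over the uncertainty set `Δ`. -/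
def IsWorst {V : Type*} (A : V → V → Prop) (p : V → ℝ) (Δ : Set (V → ℝ))
    (i j : V) (L : ℝ) : Prop :=
  IsGreatest {r | ∃ δ ∈ Δ, ∃ l, IsPath A i j l ∧ PathLen (fun v => p v + δ v) l = r} L

open Filter Topology Relation

section Paths

variable {V : Type*} {A : V → V → Prop} {i j k : V} {l m : List V}

theorem isPath_singleton (i : V) : IsPath A i i [i] :=
  ⟨List.cons_ne_nil _ _, List.isChain_singleton _, rfl, rfl⟩

theorem Relation.ReflTransGen.exists_isPath (h : ReflTransGen A i j) : ∃ l, IsPath A i j l := by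
  obtain ⟨l, hl, hlast⟩ := List.exists_isChain_cons_of_relationReflTransGen h
  exact ⟨i :: l, List.cons_ne_nil _ _, hl, rfl, by simp [List.getLast?_eq_some_getLast, hlast]⟩

theorem IsPath.dropLast_append_eq (hl : IsPath A i j l) : l.dropLast ++ [j] = l :=
  List.dropLast_append_getLast? j hl.2.2.2

theorem IsPath.dropLast_append (hl : IsPath A i j l) (hm : IsPath A j k m) :
    IsPath A i k (l.dropLast ++ m) := by
  obtain ⟨m', rfl⟩ : ∃ m', m = j :: m' := by
    obtain ⟨hm0, -, hmh, -⟩ := hm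
    cases m with
    | nil => exact absurd rfl hm0
    | cons a m' => exact ⟨m', by simpa using hmh⟩
  have hl' : l.dropLast ++ j :: m' = l ++ m' := by
    rw [← List.singleton_append, ← List.append_assoc, hl.dropLast_append_eq]
  refine ⟨by simp, ?_, ?_, ?_⟩
  · rw [hl', ← hl.dropLast_append_eq]
    exact List.IsChain.append_overlap (by rw [hl.dropLast_append_eq]; exact hl.2.1)
      (l₂ := [j]) hm.2.1 (List.cons_ne_nil _ _)
  · rw [hl', List.head?_append, hl.2.2.1]
    rfl
  · rw [List.getLast?_append_of_ne_nil _ (List.cons_ne_nil _ _)]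
    exact hm.2.2.2

theorem pathLen_dropLast_append (q : V → ℝ) (l : List V) (hm : m ≠ []) :
    PathLen q (l.dropLast ++ m) = PathLen q l + PathLen q m := by
  simp [PathLen, List.dropLast_append_of_ne_nil hm]

theorem IsPath.pairwise_transGen (hl : IsPath A i j l) : l.Pairwise (TransGen A) :=
  List.isChain_iff_pairwise.1 (hl.2.1.imp fun _ _ => .single)

theorem IsPath.nodup_dropLast (hacyc : ∀ v, ¬ TransGen A v v) (hl : IsPath A i j l) :
    l.dropLast.Nodup := by
  refine (List.nodup_iff_pairwise_ne.2 (hl.pairwise_transGen.imp ?_)).sublist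
    (List.dropLast_sublist l)
  rintro a _ h rfl
  exact hacyc a h

theorem IsPath.transGen_of_mem_dropLast (hl : IsPath A i j l) (hk : k ∈ l.dropLast) :
    TransGen A k j := by
  have hpw := hl.pairwise_transGen
  rw [← hl.dropLast_append_eq, List.pairwise_append] at hpw
  exact hpw.2.2 k hk j (List.mem_singleton_self j)

theorem IsPath.head_mem_dropLast (hl : IsPath A i j l) (hij : i ≠ j) : i ∈ l.dropLast := by
  obtain ⟨hl0, -, hlh, hll⟩ := hl
  match l, hl0 with
  | a :: l', _ =>
    obtain rfl : a = i := by simpa using hlh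
    have hl' : l' ≠ [] := by rintro rfl; exact hij (by simpa using hll)
    simp [List.dropLast_cons_of_ne_nil hl']

theorem exists_isPath_mem_dropLast (hacyc : ∀ v, ¬ TransGen A v v) (hik : ReflTransGen A i k)
    (hkj : TransGen A k j) : ∃ l, IsPath A i j l ∧ k ∈ l.dropLast := by
  obtain ⟨P, hP⟩ := hik.exists_isPath
  obtain ⟨Q, hQ⟩ := hkj.to_reflTransGen.exists_isPath
  refine ⟨P.dropLast ++ Q, hP.dropLast_append hQ, ?_⟩
  rw [List.dropLast_append_of_ne_nil hQ.1]
  exact List.mem_append_right _ (hQ.head_mem_dropLast fun h => hacyc k (h ▸ hkj))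

theorem Relation.TransGen.ne_of_forall_not_rel {t : V} (ht : ∀ v, ¬ A t v)
    (h : TransGen A i j) : i ≠ t := by
  rintro rfl
  obtain ⟨b, hb, -⟩ := TransGen.head'_iff.1 h
  exact ht b hb

end Paths

section Lengths

variable {V : Type*} {A : V → V → Prop} {i j : V} {l : List V} {q : V → ℝ} {L : ℝ}

theorem pathLen_nonneg (hq : ∀ v, 0 ≤ q v) (l : List V) : 0 ≤ PathLen q l :=
  List.sum_nonneg fun _ hx => by
    obtain ⟨v, -, rfl⟩ := List.mem_map.1 hx
    exact hq v

theorem pathLen_add_mul (p u : V → ℝ) (c : ℝ) (l : List V) :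
    PathLen (fun v => p v + c * u v) l = PathLen p l + c * (l.dropLast.map u).sum := by
  simp only [PathLen, List.sum_map_add, List.sum_map_mul_left]

theorem IsPath.pathLen_eq_zero (hl : IsPath A i j l) (hq : ∀ k, TransGen A k j → q k = 0) :
    PathLen q l = 0 :=
  List.sum_eq_zero fun _ hx => by
    obtain ⟨k, hk, rfl⟩ := List.mem_map.1 hx
    exact hq k (hl.transGen_of_mem_dropLast hk)

theorem IsLongest.nonneg (hq : ∀ v, 0 ≤ q v) (hL : IsLongest A q i j L) : 0 ≤ L := by
  obtain ⟨⟨l, -, rfl⟩, -⟩ := hL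
  exact pathLen_nonneg hq l

theorem IsLongest.eq_zero (hL : IsLongest A q i j L) (hq : ∀ k, TransGen A k j → q k = 0) :
    L = 0 := by
  obtain ⟨⟨l, hl, rfl⟩, -⟩ := hL
  exact hl.pathLen_eq_zero hq

theorem IsLongest.pathLen_eq
    (hconst : ∀ l₁ l₂, IsPath A i j l₁ → IsPath A i j l₂ → PathLen q l₁ = PathLen q l₂)
    (hL : IsLongest A q i j L) (hl : IsPath A i j l) : PathLen q l = L := by
  obtain ⟨⟨l₀, hl₀, rfl⟩, -⟩ := hL
  exact hconst l l₀ hl hl₀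

end Lengths

section Critical

variable {V : Type*} {A : V → V → Prop} {s t i j : V} {p : V → ℝ} {L : ℝ}

theorem pathLen_eq_of_critical (hsrc : ∀ v, v ≠ s → TransGen A s v)
    (hsink : ∀ v, v ≠ t → TransGen A v t) (hcrit : ∀ l, IsPath A s t l → PathLen p l = L)
    {l₁ l₂ : List V} (hl₁ : IsPath A i j l₁) (hl₂ : IsPath A i j l₂) :
    PathLen p l₁ = PathLen p l₂ := by
  obtain ⟨P, hP⟩ : ∃ P, IsPath A s i P :=
    (reflTransGen_iff_eq_or_transGen.2 ((em (i = s)).imp id (hsrc i))).exists_isPath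
  obtain ⟨R, hR⟩ : ∃ R, IsPath A j t R :=
    (reflTransGen_iff_eq_or_transGen.2 ((em (j = t)).imp Eq.symm (hsink j))).exists_isPath
  have h₁ := hcrit _ (hP.dropLast_append (hl₁.dropLast_append hR))
  have h₂ := hcrit _ (hP.dropLast_append (hl₂.dropLast_append hR))
  rw [pathLen_dropLast_append _ _ (hl₁.dropLast_append hR).1,
    pathLen_dropLast_append _ _ hR.1] at h₁
  rw [pathLen_dropLast_append _ _ (hl₂.dropLast_append hR).1,
    pathLen_dropLast_append _ _ hR.1] at h₂
  linarith

theorem longest_eq_sub_of_critical (hsrc : ∀ v, v ≠ s → TransGen A s v)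
    (hsink : ∀ v, v ≠ t → TransGen A v t) (hcrit : ∀ l, IsPath A s t l → PathLen p l = L)
    {Lsi Lij Lsj : ℝ} (hsi : IsLongest A p s i Lsi) (hij : IsLongest A p i j Lij)
    (hsj : IsLongest A p s j Lsj) : Lij = Lsj - Lsi := by
  obtain ⟨⟨P, hP, rfl⟩, -⟩ := hsi
  obtain ⟨⟨Q, hQ, rfl⟩, -⟩ := hij
  rw [← hsj.pathLen_eq (fun _ _ => pathLen_eq_of_critical hsrc hsink hcrit)
    (hP.dropLast_append hQ), pathLen_dropLast_append _ _ hQ.1]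
  ring

end Critical

section OneDisruption

variable {V : Type*} [Fintype V] {A : V → V → Prop} {s t i j k : V} {p : V → ℝ} {d L L' : ℝ}

/-- The set `Δ` of the paper; the jobs are the vertices other than `s` and `t`. -/
def oneDisruptionSet (s t : V) (d : ℝ) : Set (V → ℝ) :=
  {δ | ∃ u : V → ℝ, (∀ v, 0 ≤ u v ∧ u v ≤ 1) ∧ (∑ v, u v) ≤ 1 ∧
    u s = 0 ∧ u t = 0 ∧ δ = fun v => d * u v}

theorem isWorst_oneDisruptionSet_eq_add (hacyc : ∀ v, ¬ TransGen A v v) (hd : 0 ≤ d)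
    (hnom : ∀ l, IsPath A i j l → PathLen p l = L)
    (hW : IsWorst A p (oneDisruptionSet s t d) i j L') (hik : ReflTransGen A i k)
    (hkj : TransGen A k j) (hks : k ≠ s) (hkt : k ≠ t) : L' = L + d := by
  classical
  apply le_antisymm
  · obtain ⟨δ, ⟨u, hu, hsum, -, -, rfl⟩, l, hl, rfl⟩ := hW.1
    have hle : (l.dropLast.map u).sum ≤ 1 :=
      calc (l.dropLast.map u).sum = ∑ v ∈ l.dropLast.toFinset, u v :=
            (List.sum_toFinset u (hl.nodup_dropLast hacyc)).symm
        _ ≤ ∑ v, u v := Finset.sum_le_univ_sum_of_nonneg fun v => (hu v).1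
        _ ≤ 1 := hsum
    rw [pathLen_add_mul, hnom l hl]
    linarith [mul_le_of_le_one_right hd hle]
  · obtain ⟨l, hl, hkl⟩ := exists_isPath_mem_dropLast hacyc hik hkj
    refine hW.2 ⟨_, ⟨Pi.single k 1, fun v => ?_, by simp, by simp [hks.symm],
      by simp [hkt.symm], rfl⟩, l, hl, ?_⟩
    · by_cases hv : v = k <;> simp [hv]
    · rw [pathLen_add_mul, hnom l hl, ← List.sum_toFinset _ (hl.nodup_dropLast hacyc),
        Finset.sum_pi_single']
      simp [hkl]

theorem isWorst_oneDisruptionSet_eq_zero (hps : p s = 0)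
    (hW : IsWorst A p (oneDisruptionSet s t d) i j L') (hj : ∀ k, TransGen A k j → k = s) :
    L' = 0 := by
  obtain ⟨δ, ⟨u, -, -, hus, -, rfl⟩, l, hl, rfl⟩ := hW.1
  exact hl.pathLen_eq_zero fun k hk => by simp [hj k hk, hps, hus]

end OneDisruption

theorem notMem_extremePoints_of_eventually_add_smul_mem {E : Type*} [AddCommGroup E]
    [Module ℝ E] {C : Set E} {x d : E} (hd : d ≠ 0) (h : ∀ᶠ ε in 𝓝 (0 : ℝ), x + ε • d ∈ C) :
    x ∉ C.extremePoints ℝ := by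
  intro hx
  obtain ⟨r, hr, hC⟩ := Metric.eventually_nhds_iff.1 h
  have hmem : ∀ σ : ℝ, |σ| < r → x + σ • d ∈ C :=
    fun σ hσ => hC (by simpa [Real.dist_eq] using hσ)
  have hr2 : |r / 2| < r := by rw [abs_of_pos (by positivity)]; linarith
  obtain ⟨h₁, -⟩ := (mem_extremePoints.1 hx).2 _ (hmem (r / 2) hr2) _
    (hmem (-(r / 2)) (by rwa [abs_neg])) ⟨1 / 2, 1 / 2, by norm_num, by norm_num, by norm_num,
      by module⟩
  exact hd ((smul_eq_zero.1 (add_eq_left.1 h₁)).resolve_left (by positivity))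

section FracShift

noncomputable def nonIntIndicator (x : ℝ) : ℝ := if Int.fract x = 0 then 0 else 1

noncomputable def fracShift (ε x : ℝ) : ℝ := x + ε * nonIntIndicator x

variable {a b ε : ℝ} {n : ℤ}

theorem nonIntIndicator_eq_of_sub_eq_intCast (h : a - b = n) :
    nonIntIndicator a = nonIntIndicator b := by
  rw [nonIntIndicator, nonIntIndicator, Int.fract_eq_fract.2 ⟨n, h⟩]

theorem nonIntIndicator_eq_zero_iff : nonIntIndicator a = 0 ↔ Int.fract a = 0 := by
  unfold nonIntIndicator
  split_ifs <;> simp [*]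

theorem exists_sub_eq_intCast_of_nonIntIndicator_eq_zero (ha : nonIntIndicator a = 0)
    (hb : nonIntIndicator b = 0) : ∃ n : ℤ, a - b = n :=
  Int.fract_eq_fract.1 <|
    (nonIntIndicator_eq_zero_iff.1 ha).trans (nonIntIndicator_eq_zero_iff.1 hb).symm

@[simp]
theorem fracShift_zero : fracShift ε 0 = 0 := by simp [fracShift, nonIntIndicator]

theorem fracShift_sub_fracShift (h : a - b = n) (ε : ℝ) :
    fracShift ε a - fracShift ε b = n := by
  rw [fracShift, fracShift, nonIntIndicator_eq_of_sub_eq_intCast h]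
  linarith

theorem eventually_intCast_le_fracShift_sub (h : (n : ℝ) ≤ a - b) :
    ∀ᶠ ε in 𝓝 0, (n : ℝ) ≤ fracShift ε a - fracShift ε b := by
  rcases h.eq_or_lt with h | h
  · exact .of_forall fun ε => (fracShift_sub_fracShift h.symm ε).ge
  · have hcont : ContinuousAt (fun ε => fracShift ε a - fracShift ε b) 0 := by
      unfold fracShift; fun_prop
    exact (continuousAt_const.eventually_lt hcont (by simpa [fracShift] using h)).mono
      fun _ => le_of_lt

theorem eventually_fracShift_sub_le_intCast (h : a - b ≤ n) :
    ∀ᶠ ε in 𝓝 0, fracShift ε a - fracShift ε b ≤ n :=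
  (eventually_intCast_le_fracShift_sub (a := b) (b := a) (n := -n) (by push_cast; linarith)).mono
    fun _ hε => by push_cast at hε; linarith

theorem eventually_forall_fracShift_sub_mem_Icc {ι : Type*} [Finite ι] {x y : ι → ℝ}
    (h : ∀ i, 0 ≤ x i - y i ∧ x i - y i ≤ 1) :
    ∀ᶠ ε in 𝓝 0, ∀ i, 0 ≤ fracShift ε (x i) - fracShift ε (y i) ∧
      fracShift ε (x i) - fracShift ε (y i) ≤ 1 :=
  eventually_all.2 fun i =>
    ((eventually_intCast_le_fracShift_sub (n := 0) (by simpa using (h i).1)).and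
      (eventually_fracShift_sub_le_intCast (n := 1) (by simpa using (h i).2))).mono
      fun _ h => by simpa using h

end FracShift

section Dom

variable {V : Type*} {A : V → V → Prop} {s t : V} {L0 LΔ : V → V → ℝ} {M d : ℝ} {M' : ℕ}
  {zs z h W Y : V → ℝ}

/-- The (Dom) constraints of the paper, with longest-path coefficients `L0`, `LΔ`. -/
def DomConstraints (A : V → V → Prop) (s t : V) (L0 LΔ : V → V → ℝ) (M : ℝ) (z h : V → ℝ) :
    Prop :=
  z s = 0 ∧ (∀ v, 0 ≤ z v) ∧ z t ≤ M ∧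
    ∀ i j, TransGen A i j → L0 i j + (LΔ i j - L0 i j) * h j ≤ z j - z i

/-- The (Dom) constraints of the unitary instance `(G, 0, 1, M')`. -/
def UnitaryDomConstraints (A : V → V → Prop) (s t : V) (M' : ℕ) (W h : V → ℝ) : Prop :=
  W s = 0 ∧ (∀ v, 0 ≤ W v) ∧ W t ≤ (M' : ℝ) ∧
    (∀ i j, i ≠ s → TransGen A i j → h j ≤ W j - W i) ∧
    (∀ j, TransGen A s j → (∃ k, k ≠ s ∧ TransGen A k j) → h j ≤ W j - W s) ∧
    (∀ j, TransGen A s j → ¬ (∃ k, k ≠ s ∧ TransGen A k j) → 0 ≤ W j - W s)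

def DomRelaxation (A : V → V → Prop) (s t : V) (L0 LΔ : V → V → ℝ) (M : ℝ) :
    Set ((V → ℝ) × (V → ℝ)) :=
  {zh | DomConstraints A s t L0 LΔ M zh.1 zh.2 ∧ (∀ v, 0 ≤ zh.2 v ∧ zh.2 v ≤ 1) ∧
    zh.2 s = 1 ∧ zh.2 t = 0}

theorem add_sub_mul_le_sub_iff {L0 LΔ zi zj xi xj c hj : ℝ} (hd : 0 < d) (hL0 : L0 = zj - zi)
    (hLΔ : LΔ = L0 + d * c) :
    L0 + (LΔ - L0) * hj ≤ xj - xi ↔ c * hj ≤ (xj - zj) / d - (xi - zi) / d := by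
  subst hL0 hLΔ
  rw [div_sub_div_same, le_div_iff₀ hd]
  constructor <;> intro <;> linarith

theorem domConstraints_iff_unitaryDomConstraints (hd : 0 < d) (hzs : zs s = 0)
    (hzs0 : ∀ v, 0 ≤ zs v) (hsrc : ∀ v, v ≠ s → TransGen A s v)
    (ha : ∀ i j, TransGen A i j → L0 i j = zs j - zs i)
    (hb1 : ∀ i j, i ≠ s → TransGen A i j → LΔ i j = zs j - zs i + d)
    (hb2 : ∀ j, (∃ k, k ≠ s ∧ TransGen A k j) → TransGen A s j → LΔ s j = zs j + d)
    (hb3 : ∀ j, TransGen A s j → ¬ (∃ k, k ≠ s ∧ TransGen A k j) → LΔ s j = L0 s j)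
    (hM : M = zs t + d * M') (hh : ∀ v, 0 ≤ h v) :
    DomConstraints A s t L0 LΔ M z h ↔
      UnitaryDomConstraints A s t M' (fun v => (z v - zs v) / d) h := by
  constructor
  · rintro ⟨hz0, -, hzt, hdom⟩
    have hge : ∀ v, zs v ≤ z v := by
      intro v
      rcases eq_or_ne v s with rfl | hv
      · rw [hzs, hz0]
      have hsv := hsrc v hv
      have hgap : L0 s v ≤ LΔ s v := by
        by_cases hk : ∃ k, k ≠ s ∧ TransGen A k v
        · rw [hb2 v hk hsv, ha s v hsv, hzs]; linarith
        · rw [hb3 v hsv hk]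
      nlinarith [hdom s v hsv, mul_nonneg (sub_nonneg.2 hgap) (hh v), ha s v hsv]
    refine ⟨by simp [hz0, hzs], fun v => div_nonneg (sub_nonneg.2 (hge v)) hd.le, ?_,
      fun i j hi hij => ?_, fun j hsj hk => ?_, fun j hsj hk => ?_⟩
    · rw [div_le_iff₀ hd]; linarith
    · simpa using (add_sub_mul_le_sub_iff hd (ha i j hij) (c := 1)
        (by rw [hb1 i j hi hij, ha i j hij]; ring)).1 (hdom i j hij)
    · simpa using (add_sub_mul_le_sub_iff hd (ha s j hsj) (c := 1)
        (by rw [hb2 j hk hsj, ha s j hsj, hzs]; ring)).1 (hdom s j hsj)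
    · simpa using (add_sub_mul_le_sub_iff hd (ha s j hsj) (c := 0)
        (by rw [hb3 j hsj hk]; ring)).1 (hdom s j hsj)
  · rintro ⟨hW0, hWnn, hWt, hpair, hjob, hnojob⟩
    have hge : ∀ v, zs v ≤ z v := fun v => by
      have := hWnn v
      rwa [le_div_iff₀ hd, zero_mul, sub_nonneg] at this
    refine ⟨?_, fun v => (hzs0 v).trans (hge v), ?_, fun i j hij => ?_⟩
    · rw [div_eq_zero_iff, hzs, sub_zero] at hW0
      exact hW0.resolve_right hd.ne'
    · rw [div_le_iff₀ hd] at hWt; linarith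
    rcases eq_or_ne i s with rfl | hi
    · by_cases hk : ∃ k, k ≠ i ∧ TransGen A k j
      · exact (add_sub_mul_le_sub_iff hd (ha i j hij) (c := 1)
          (by rw [hb2 j hk hij, ha i j hij, hzs]; ring)).2 (by simpa using hjob j hij hk)
      · exact (add_sub_mul_le_sub_iff hd (ha i j hij) (c := 0)
          (by rw [hb3 j hij hk]; ring)).2 (by simpa using hnojob j hij hk)
    · exact (add_sub_mul_le_sub_iff hd (ha i j hij) (c := 1)
        (by rw [hb1 i j hi hij, ha i j hij]; ring)).2 (by simpa using hpair i j hi hij)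

theorem UnitaryDomConstraints.eventually_fracShift [Finite V]
    (hU : UnitaryDomConstraints A s t M' W (fun v => W v - Y v)) :
    ∀ᶠ ε in 𝓝 0, UnitaryDomConstraints A s t M' (fun v => fracShift ε (W v))
      (fun v => fracShift ε (W v) - fracShift ε (Y v)) := by
  obtain ⟨hW0, hWnn, hWt, hpair, hjob, hnojob⟩ := hU
  have hle : ∀ a b : ℝ, 0 ≤ a - b → ∀ᶠ ε in 𝓝 0, 0 ≤ fracShift ε a - fracShift ε b :=
    fun a b hab => by
      simpa using eventually_intCast_le_fracShift_sub (n := 0) (by simpa using hab)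
  have hnn : ∀ᶠ ε in 𝓝 0, ∀ v, 0 ≤ fracShift ε (W v) :=
    eventually_all.2 fun v => by simpa using hle (W v) 0 (by simpa using hWnn v)
  have ht : ∀ᶠ ε in 𝓝 0, fracShift ε (W t) ≤ M' := by
    simpa using eventually_fracShift_sub_le_intCast (b := 0) (n := M') (by simpa using hWt)
  have hpair' : ∀ᶠ ε in 𝓝 0, ∀ i j, i ≠ s → TransGen A i j →
      0 ≤ fracShift ε (Y j) - fracShift ε (W i) :=
    eventually_all.2 fun i => eventually_all.2 fun j => eventually_imp_distrib_left.2 fun hi =>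
      eventually_imp_distrib_left.2 fun hij => hle _ _ (by linarith [hpair i j hi hij])
  have hjob' : ∀ᶠ ε in 𝓝 0, ∀ j, TransGen A s j → (∃ k, k ≠ s ∧ TransGen A k j) →
      0 ≤ fracShift ε (Y j) - fracShift ε (W s) :=
    eventually_all.2 fun j => eventually_imp_distrib_left.2 fun hsj =>
      eventually_imp_distrib_left.2 fun hk => hle _ _ (by linarith [hjob j hsj hk])
  have hnojob' : ∀ᶠ ε in 𝓝 0, ∀ j, TransGen A s j → ¬ (∃ k, k ≠ s ∧ TransGen A k j) →
      0 ≤ fracShift ε (W j) - fracShift ε (W s) :=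
    eventually_all.2 fun j => eventually_imp_distrib_left.2 fun hsj =>
      eventually_imp_distrib_left.2 fun hk => hle _ _ (hnojob j hsj hk)
  filter_upwards [hnn, ht, hpair', hjob', hnojob'] with ε hnn ht hpair' hjob' hnojob'
  refine ⟨by simp [hW0], hnn, ht, fun i j hi hij => ?_, fun j hsj hk => ?_, hnojob'⟩
  · linarith [hpair' i j hi hij]
  · linarith [hjob' j hsj hk]

theorem exists_intCast_eq_of_mem_extremePoints_domRelaxation [Finite V] (hd : 0 < d)
    (hc : ∀ z h, (∀ v, 0 ≤ h v) → (DomConstraints A s t L0 LΔ M z h ↔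
      UnitaryDomConstraints A s t M' (fun v => (z v - zs v) / d) h))
    {zh : (V → ℝ) × (V → ℝ)} (hzh : zh ∈ (DomRelaxation A s t L0 LΔ M).extremePoints ℝ)
    (v : V) : ∃ n : ℤ, zh.2 v = n := by
  obtain ⟨z, h⟩ := zh
  obtain ⟨hdom, hbox, hs, ht⟩ := hzh.1
  set W : V → ℝ := fun v => (z v - zs v) / d
  set Y : V → ℝ := fun v => W v - h v
  have hWY : ∀ v, W v - Y v = h v := fun v => sub_sub_cancel _ _
  have hU : UnitaryDomConstraints A s t M' W (fun v => W v - Y v) := by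
    simpa only [hWY] using (hc z h fun v => (hbox v).1).1 hdom
  set e : (V → ℝ) × (V → ℝ) := (fun v => d * nonIntIndicator (W v),
    fun v => nonIntIndicator (W v) - nonIntIndicator (Y v))
  by_contra! hv
  refine notMem_extremePoints_of_eventually_add_smul_mem (d := e) (fun he => ?_) ?_ hzh
  · have h₁ := congrFun (congrArg Prod.fst he) v
    have h₂ := congrFun (congrArg Prod.snd he) v
    simp only [e, Prod.fst_zero, Pi.zero_apply, mul_eq_zero, hd.ne', false_or] at h₁
    simp only [e, Prod.snd_zero, Pi.zero_apply, h₁, zero_sub, neg_eq_zero] at h₂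
    obtain ⟨n, hn⟩ := exists_sub_eq_intCast_of_nonIntIndicator_eq_zero h₁ h₂
    exact hv n ((hWY v).symm.trans hn)
  filter_upwards [hU.eventually_fracShift,
    eventually_forall_fracShift_sub_mem_Icc (x := W) (y := Y) fun v => by rw [hWY]; exact hbox v]
    with ε hUε hboxε
  have hz : (fun v => (((z, h) + ε • e).1 v - zs v) / d) = fun v => fracShift ε (W v) := by
    funext v
    simp only [e, Prod.fst_add, Prod.smul_fst, Pi.add_apply, Pi.smul_apply, smul_eq_mul,
      fracShift, W]
    field_simp
    ring
  have hh : ((z, h) + ε • e).2 = fun v => fracShift ε (W v) - fracShift ε (Y v) := by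
    funext v
    simp only [e, Prod.snd_add, Prod.smul_snd, Pi.add_apply, Pi.smul_apply, smul_eq_mul,
      fracShift]
    rw [← hWY v]
    ring
  simp only [DomRelaxation, Set.mem_ofPred_eq, hh]
  refine ⟨(hc _ _ fun v => (hboxε v).1).2 (hz ▸ hUε), hboxε, ?_, ?_⟩
  · simpa using fracShift_sub_fracShift (n := 1) (by simpa [hWY] using hs) ε
  · simpa using fracShift_sub_fracShift (n := 0) (by simpa [hWY] using ht) ε

end Dom

theorem critical_one_disruption_reduction_general
    {V : Type*} [Fintype V] (A : V → V → Prop) (s t : V)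
    (p : V → ℝ) (hp : ∀ v, 0 ≤ p v) (hps : p s = 0)
    (hacyc : ∀ v, ¬ Relation.TransGen A v v)
    (hsrc : ∀ v, v ≠ s → Relation.TransGen A s v)
    (hsink : ∀ v, v ≠ t → Relation.TransGen A v t)
    (hnot : ∀ i, ¬ A t i)
    (dhat0 : ℝ) (hd0 : 0 < dhat0)
    (Δ : Set (V → ℝ))
    (hΔ : Δ = {δ | ∃ u : V → ℝ, (∀ v, 0 ≤ u v ∧ u v ≤ 1) ∧ (∑ v, u v) ≤ 1 ∧
                  u s = 0 ∧ u t = 0 ∧ δ = fun v => dhat0 * u v})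
    (L0 LΔ : V → V → ℝ)
    (hL0 : ∀ i j, i = j ∨ Relation.TransGen A i j → IsLongest A p i j (L0 i j))
    (hLΔ : ∀ i j, Relation.TransGen A i j → IsWorst A p Δ i j (LΔ i j))
    (hcrit : ∀ l : List V, IsPath A s t l → PathLen p l = L0 s t)
    (M' : ℕ) (M : ℝ) (hM : M = L0 s t + dhat0 * (M' : ℝ)) :
    -- (a) nominal longest paths are differences of the earliest nominal schedule
    (∀ i j, Relation.TransGen A i j → L0 i j = L0 s j - L0 s i) ∧
    -- (b) worst-case longest paths for pairs with a job on the path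
    (∀ i j, i ≠ s → i ≠ t → Relation.TransGen A i j →
        LΔ i j = L0 s j - L0 s i + dhat0) ∧
    (∀ j, (∃ k, k ≠ s ∧ Relation.TransGen A k j) → Relation.TransGen A s j →
        LΔ s j = L0 s j + dhat0) ∧
    -- (c) equivalence of the (Dom) constraints with the unitary (Dom) constraints
    (∀ (z h : V → ℝ), (∀ v, 0 ≤ h v ∧ h v ≤ 1) → h t = 0 →
      ((z s = 0 ∧ (∀ v, 0 ≤ z v) ∧ z t ≤ M ∧
          ∀ i j, Relation.TransGen A i j →
            L0 i j + (LΔ i j - L0 i j) * h j ≤ z j - z i) ↔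
        ((z s - L0 s s) / dhat0 = 0 ∧
          (∀ v, 0 ≤ (z v - L0 s v) / dhat0) ∧
          (z t - L0 s t) / dhat0 ≤ (M' : ℝ) ∧
          (∀ i j, i ≠ s → Relation.TransGen A i j →
            h j ≤ (z j - L0 s j) / dhat0 - (z i - L0 s i) / dhat0) ∧
          (∀ j, Relation.TransGen A s j → (∃ k, k ≠ s ∧ Relation.TransGen A k j) →
            h j ≤ (z j - L0 s j) / dhat0 - (z s - L0 s s) / dhat0) ∧
          (∀ j, Relation.TransGen A s j → ¬ (∃ k, k ≠ s ∧ Relation.TransGen A k j) →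
            0 ≤ (z j - L0 s j) / dhat0 - (z s - L0 s s) / dhat0)))) ∧
    -- (d) integrality of the h-components of extreme points of the (Dom) relaxation
    (∀ zh ∈ Set.extremePoints ℝ
        {zh : (V → ℝ) × (V → ℝ) |
          (zh.1 s = 0 ∧ (∀ v, 0 ≤ zh.1 v) ∧ zh.1 t ≤ M ∧
            ∀ i j, Relation.TransGen A i j →
              L0 i j + (LΔ i j - L0 i j) * zh.2 j ≤ zh.1 j - zh.1 i) ∧
          (∀ v, 0 ≤ zh.2 v ∧ zh.2 v ≤ 1) ∧ zh.2 s = 1 ∧ zh.2 t = 0},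
      ∀ v, v ≠ s → v ≠ t → ∃ n : ℤ, zh.2 v = (n : ℝ)) := by
  subst hΔ
  have hconst : ∀ i j l₁ l₂, IsPath A i j l₁ → IsPath A i j l₂ → PathLen p l₁ = PathLen p l₂ :=
    fun _ _ _ _ => pathLen_eq_of_critical hsrc hsink hcrit
  have hL0s : ∀ v, IsLongest A p s v (L0 s v) :=
    fun v => hL0 s v ((em (s = v)).imp id fun hv => hsrc v (Ne.symm hv))
  have hzs : L0 s s = 0 := by
    simpa [PathLen] using ((hL0s s).pathLen_eq (hconst s s) (isPath_singleton s)).symm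
  have ha : ∀ i j, TransGen A i j → L0 i j = L0 s j - L0 s i := fun i j hij =>
    longest_eq_sub_of_critical hsrc hsink hcrit (hL0s i) (hL0 i j (.inr hij)) (hL0s j)
  have hjob : ∀ i j k, ReflTransGen A i k → TransGen A k j → k ≠ s →
      LΔ i j = L0 i j + dhat0 := fun i j k hik hkj hks =>
    isWorst_oneDisruptionSet_eq_add hacyc hd0.le
      (fun _ => (hL0 i j (.inr (.trans_right hik hkj))).pathLen_eq (hconst i j))
      (hLΔ i j (.trans_right hik hkj)) hik hkj hks (hkj.ne_of_forall_not_rel hnot)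
  have hb1 : ∀ i j, i ≠ s → TransGen A i j → LΔ i j = L0 s j - L0 s i + dhat0 :=
    fun i j hi hij => by rw [hjob i j i .refl hij hi, ha i j hij]
  have hb2 : ∀ j, (∃ k, k ≠ s ∧ TransGen A k j) → TransGen A s j → LΔ s j = L0 s j + dhat0 :=
    fun j ⟨k, hks, hkj⟩ _ => hjob s j k (hsrc k hks).to_reflTransGen hkj hks
  have hb3 : ∀ j, TransGen A s j → ¬ (∃ k, k ≠ s ∧ TransGen A k j) → LΔ s j = L0 s j :=
    fun j hsj hj => by
      have hj' : ∀ k, TransGen A k j → k = s := fun k hk => by_contra fun hks => hj ⟨k, hks, hk⟩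
      rw [isWorst_oneDisruptionSet_eq_zero hps (hLΔ s j hsj) hj',
        (hL0s j).eq_zero fun k hk => by rw [hj' k hk, hps]]
  have hc : ∀ z h, (∀ v, 0 ≤ h v) → (DomConstraints A s t L0 LΔ M z h ↔
      UnitaryDomConstraints A s t M' (fun v => (z v - L0 s v) / dhat0) h) :=
    fun z h hh => domConstraints_iff_unitaryDomConstraints hd0 hzs (fun v => (hL0s v).nonneg hp)
      hsrc ha hb1 hb2 hb3 hM hh
  exact ⟨ha, fun i j hi _ hij => hb1 i j hi hij, hb2, fun z h hh _ => hc z h fun v => (hh v).1,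
    fun zh hzh v _ _ => exists_intCast_eq_of_mem_extremePoints_domRelaxation hd0 hc hzh v⟩

/-- reduction from critical precedence graphs under 1-disruption
uncertainty to the unitary case: with `z*_i = L⁰(s,i)`, the longest-path coefficients
split as stated, the (Dom) constraints for `(G(p), M, Δ)` with `M = L⁰(s,t) + d̂₀ M'`
are equivalent to the unitary (Dom) constraints for `((z − z*)/d̂₀, h)` with deadline
`M'`, and every extreme point of the linear relaxation of (Dom) has integer
`h`-components. -/
theorem critical_one_disruption_reduction
    {V : Type*} [Fintype V] (A : V → V → Prop) (s t : V)
    (p : V → ℝ) (hp : ∀ v, 0 ≤ p v) (hps : p s = 0)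
    (hacyc : ∀ v, ¬ Relation.TransGen A v v)
    (hsrc : ∀ v, v ≠ s → Relation.TransGen A s v)
    (hsink : ∀ v, v ≠ t → Relation.TransGen A v t)
    (hnos : ∀ i, ¬ A i s) (hnot : ∀ i, ¬ A t i)
    (dhat0 : ℝ) (hd0 : 0 < dhat0)
    (Δ : Set (V → ℝ))
    (hΔ : Δ = {δ | ∃ u : V → ℝ, (∀ v, 0 ≤ u v ∧ u v ≤ 1) ∧ (∑ v, u v) ≤ 1 ∧
                  u s = 0 ∧ u t = 0 ∧ δ = fun v => dhat0 * u v})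
    (L0 LΔ : V → V → ℝ)
    (hL0 : ∀ i j, i = j ∨ Relation.TransGen A i j → IsLongest A p i j (L0 i j))
    (hLΔ : ∀ i j, Relation.TransGen A i j → IsWorst A p Δ i j (LΔ i j))
    (hcrit : ∀ l : List V, IsPath A s t l → PathLen p l = L0 s t)
    (M' : ℕ) (M : ℝ) (hM : M = L0 s t + dhat0 * (M' : ℝ)) :
    -- (a) nominal longest paths are differences of the earliest nominal schedule
    (∀ i j, Relation.TransGen A i j → L0 i j = L0 s j - L0 s i) ∧
    -- (b) worst-case longest paths for pairs with a job on the path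
    (∀ i j, i ≠ s → i ≠ t → Relation.TransGen A i j →
        LΔ i j = L0 s j - L0 s i + dhat0) ∧
    (∀ j, (∃ k, k ≠ s ∧ Relation.TransGen A k j) → Relation.TransGen A s j →
        LΔ s j = L0 s j + dhat0) ∧
    -- (c) equivalence of the (Dom) constraints with the unitary (Dom) constraints
    (∀ (z h : V → ℝ), (∀ v, 0 ≤ h v ∧ h v ≤ 1) → h t = 0 →
      ((z s = 0 ∧ (∀ v, 0 ≤ z v) ∧ z t ≤ M ∧
          ∀ i j, Relation.TransGen A i j →
            L0 i j + (LΔ i j - L0 i j) * h j ≤ z j - z i) ↔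
        ((z s - L0 s s) / dhat0 = 0 ∧
          (∀ v, 0 ≤ (z v - L0 s v) / dhat0) ∧
          (z t - L0 s t) / dhat0 ≤ (M' : ℝ) ∧
          (∀ i j, i ≠ s → Relation.TransGen A i j →
            h j ≤ (z j - L0 s j) / dhat0 - (z i - L0 s i) / dhat0) ∧
          (∀ j, Relation.TransGen A s j → (∃ k, k ≠ s ∧ Relation.TransGen A k j) →
            h j ≤ (z j - L0 s j) / dhat0 - (z s - L0 s s) / dhat0) ∧
          (∀ j, Relation.TransGen A s j → ¬ (∃ k, k ≠ s ∧ Relation.TransGen A k j) →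
            0 ≤ (z j - L0 s j) / dhat0 - (z s - L0 s s) / dhat0)))) ∧
    -- (d) integrality of the h-components of extreme points of the (Dom) relaxation
    (∀ zh ∈ Set.extremePoints ℝ
        {zh : (V → ℝ) × (V → ℝ) |
          (zh.1 s = 0 ∧ (∀ v, 0 ≤ zh.1 v) ∧ zh.1 t ≤ M ∧
            ∀ i j, Relation.TransGen A i j →
              L0 i j + (LΔ i j - L0 i j) * zh.2 j ≤ zh.1 j - zh.1 i) ∧
          (∀ v, 0 ≤ zh.2 v ∧ zh.2 v ≤ 1) ∧ zh.2 s = 1 ∧ zh.2 t = 0},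
      ∀ v, v ≠ s → v ≠ t → ∃ n : ℤ, zh.2 v = (n : ℝ)) :=
  critical_one_disruption_reduction_general A s t p hp hps hacyc hsrc hsink hnot dhat0 hd0 Δ hΔ L0
    LΔ hL0 hLΔ hcrit M' M hM
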